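/- If R₀ < 1, then every root λ ∈ ℂ of the polynomial (μ+λ)²(λ² + (2μ+ε+γ)λ + (μ+ε)(μ+γ)(1 − R₀)) has strictly negative real part; hence the disease-free equilibrium of the SEIR model is locally asymptotically stable. -/
import Mathlib

lemma quad_root_neg_re (b c : ℝ) (hb : 0 < b) (hc : 0 < c) (z : ℂ)
    (h : z ^ 2 + (b : ℂ) * z + (c : ℂ) = 0) : z.re < 0 := by
  have hre := congrArg Complex.re h
  have him := congrArg Complex.im h
  simp [Complex.add_re, Complex.add_im, pow_two, Complex.mul_re, Complex.mul_im,
    Complex.ofReal_re, Complex.ofReal_im] at hre him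
  have h2 : z.im * (2 * z.re + b) = 0 := by linear_combination him
  rcases mul_eq_zero.mp h2 with hy | hy
  · by_contra hx
    push_neg at hx
    nlinarith [sq_nonneg z.re]
  · linarith

theorem seir_dfe_locally_asymptotically_stable
    (τ μ β ε γ : ℝ) (hτ : 0 < τ) (hμ : 0 < μ) (hβ : 0 < β) (hε : 0 < ε) (hγ : 0 < γ)
    (hR0 : τ * β * ε / (μ * (μ + γ) * (μ + ε)) < 1) :
    ∀ lam : ℂ,
      ((μ : ℂ) + lam) ^ 2 *
        (lam ^ 2 + ((2 * μ + ε + γ : ℝ) : ℂ) * lam +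
          (((μ + ε) * (μ + γ) * (1 - τ * β * ε / (μ * (μ + γ) * (μ + ε))) : ℝ) : ℂ)) = 0 →
      lam.re < 0 := by
  intro lam h
  rcases mul_eq_zero.mp h with h1 | h2
  · have : (μ : ℂ) + lam = 0 := by
      have := pow_eq_zero_iff (n := 2) (by norm_num) |>.mp h1
      exact this
    have : lam = -(μ : ℂ) := by linear_combination this
    rw [this]
    simpa using hμ
  · have h3 : (0:ℝ) < 1 - τ * β * ε / (μ * (μ + γ) * (μ + ε)) := by linarith
    have h4 : (0:ℝ) < (μ + ε) * (μ + γ) * (1 - τ * β * ε / (μ * (μ + γ) * (μ + ε))) := by positivity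
    exact quad_root_neg_re _ _ (by linarith) h4 lam h2
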